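/- Let S be a nonempty finite set and 1 ≤ k < n integers. Let u : S^n → ℕ with total count M = Σ_{x∈S^n} u_x > 0, and assume that for every j ∈ {k+1,…,n−1} and every w ∈ S^k the marginal count of u at positions (j−k+1,…,j) with values w is nonzero. Define p̂ ∈ ℝ^{S^n} by p̂_x = (1/M)·(∏_{j=k+1}^n u|_{(j−k,…,j)=(x_{j−k},…,x_j)}) / (∏_{j=k+1}^{n−1} u|_{(j−k+1,…,j)=(x_{j−k+1},…,x_j)}). Then Σ_{x∈S^n} p̂_x = 1 and p̂_x ≥ 0 for all x, i.e., p̂ lies in the probability simplex. -/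
import Mathlib


open MvPolynomial

namespace MSM

variable {S : Type*}

/-- First `k` entries of a path of length `n`. -/
def pathInit {n k : ℕ} (hk : k ≤ n) (x : Fin n → S) : Fin k → S :=
  fun i => x (Fin.castLE hk i)

/-- Length-`m` contiguous segment of a path starting at position `s` (0-indexed). -/
def seg {n : ℕ} (s m : ℕ) (h : s + m ≤ n) (x : Fin n → S) : Fin m → S :=
  fun t => x ⟨s + t.1, by have := t.isLt; omega⟩

/-- The contiguous window `(x_ℓ, …, x_{ℓ+k})` of length `k+1` starting at position `ℓ`
(0-indexed); these are the windows `(x_{ℓ-k},…,x_ℓ)`, `k+1 ≤ ℓ ≤ n`, in 1-indexed notation. -/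
def window {n k : ℕ} (hkn : k < n) (ℓ : Fin (n - k)) (x : Fin n → S) : Fin (k + 1) → S :=
  fun t => x ⟨ℓ.1 + t.1, by have := ℓ.isLt; have := t.isLt; omega⟩

/-- The nonhomogeneous `k`-th order multistate Markov parametrization `φ`. -/
def phi {n k : ℕ} (hkn : k < n) (pi : (Fin k → S) → ℝ)
    (a : Fin (n - k) → (Fin (k + 1) → S) → ℝ) : (Fin n → S) → ℝ :=
  fun x => pi (pathInit hkn.le x) * ∏ ℓ : Fin (n - k), a ℓ (window hkn ℓ x)

/-- The homogeneous `k`-th order multistate Markov parametrization `ψ`. -/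
def psi {n k : ℕ} (hkn : k < n) (pi : (Fin k → S) → ℝ)
    (a : (Fin (k + 1) → S) → ℝ) : (Fin n → S) → ℝ :=
  fun x => pi (pathInit hkn.le x) * ∏ ℓ : Fin (n - k), a (window hkn ℓ x)

/-- The vanishing ideal of a subset of `ℝ^{S^n}` inside `ℝ[p_x : x ∈ S^n]`. -/
noncomputable def vanishingIdeal {σ : Type*} (W : Set (σ → ℝ)) : Ideal (MvPolynomial σ ℝ) where
  carrier := { f | ∀ p ∈ W, MvPolynomial.eval p f = 0 }
  add_mem' := by
    intro f g hf hg p hp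
    simp only [Set.mem_setOf_eq] at *
    rw [map_add, hf p hp, hg p hp, add_zero]
  zero_mem' := by intro p hp; simp
  smul_mem' := by
    intro c f hf p hp
    simp only [Set.mem_setOf_eq] at *
    rw [smul_eq_mul, map_mul, hf p hp, mul_zero]

/-- Marginal count: the sum of the counts `u y` over all paths `y` whose length-`m` segment
starting at position `s` equals `w`. -/
def margin [Fintype S] [DecidableEq S] {n : ℕ} (u : (Fin n → S) → ℕ)
    (s m : ℕ) (h : s + m ≤ n) (w : Fin m → S) : ℕ :=
  ∑ y : Fin n → S, if seg s m h y = w then u y else 0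

/-- The closed-form MLE for the nonhomogeneous `k`-th order multistate Markov model:
`p̂_x = (1/M) · (∏_{windows} marginal window count at x) / (∏_{separators} marginal
`k`-block count at x)`. -/
noncomputable def pHat [Fintype S] [DecidableEq S] {n k : ℕ} (hkn : k < n)
    (u : (Fin n → S) → ℕ) (x : Fin n → S) : ℝ :=
  (1 / (∑ y : Fin n → S, u y : ℝ)) *
    (∏ ℓ : Fin (n - k), (margin u ℓ.1 (k + 1) (by have := ℓ.isLt; omega)
        (seg ℓ.1 (k + 1) (by have := ℓ.isLt; omega) x) : ℝ)) /
    (∏ m : Fin (n - k - 1), (margin u (m.1 + 1) k (by have := m.isLt; omega)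
        (seg (m.1 + 1) k (by have := m.isLt; omega) x) : ℝ))

set_option linter.unusedSectionVars false

variable [Fintype S] [DecidableEq S]

lemma snoc_eq_snoc_iff {m : ℕ} {a w : Fin m → S} {b c : S} :
    (Fin.snoc a b : Fin (m+1) → S) = Fin.snoc w c ↔ a = w ∧ b = c := by
  constructor
  · intro h
    constructor
    · funext i
      have := congrFun h i.castSucc
      simpa using this
    · have := congrFun h (Fin.last m)
      simpa using this
  · rintro ⟨rfl, rfl⟩; rfl

lemma sum_margin_univ {n : ℕ} (u : (Fin n → S) → ℕ) (s m : ℕ) (h : s + m ≤ n) :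
    ∑ w : Fin m → S, margin u s m h w = ∑ y : Fin n → S, u y := by
  unfold margin
  rw [Finset.sum_comm]
  refine Finset.sum_congr rfl fun y _ => ?_
  simp [Finset.sum_ite_eq]

lemma seg_eq_snoc {n : ℕ} (s m : ℕ) (h : s + (m+1) ≤ n) (y : Fin n → S) :
    seg s (m+1) h y = Fin.snoc (seg s m (by omega) y) (y ⟨s + m, by omega⟩) := by
  funext t
  induction t using Fin.lastCases with
  | last => simp [seg]
  | cast i => simp [seg, Fin.snoc_castSucc]

lemma sum_margin_snoc {n : ℕ} (u : (Fin n → S) → ℕ) (s m : ℕ) (h : s + (m+1) ≤ n)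
    (w : Fin m → S) :
    ∑ c : S, margin u s (m+1) h (Fin.snoc w c) = margin u s m (by omega) w := by
  unfold margin
  rw [Finset.sum_comm]
  refine Finset.sum_congr rfl fun y _ => ?_
  rw [show (fun c => if seg s (m+1) h y = Fin.snoc w c then u y else 0)
      = fun c => if seg s m (by omega) y = w ∧ y ⟨s + m, by omega⟩ = c then u y else 0 from ?_]
  · by_cases hA : seg s m (by omega) y = w
    · simp [hA, Finset.sum_ite_eq]
    · simp [hA]
  · funext c
    rw [seg_eq_snoc s m h y]
    simp [snoc_eq_snoc_iff]

lemma sum_pi_snoc {L : ℕ} (f : (Fin (L+1) → S) → ℝ) :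
    ∑ z : Fin (L+1) → S, f z = ∑ z : Fin L → S, ∑ c : S, f (Fin.snoc z c) := by
  rw [← (Fin.snocEquiv (fun _ => S)).sum_comp f, Fintype.sum_prod_type, Finset.sum_comm]
  rfl

lemma seg_snoc {L : ℕ} (s m : ℕ) (h : s + m ≤ L) (h' : s + m ≤ L + 1)
    (z : Fin L → S) (c : S) :
    seg s m h' (Fin.snoc z c) = seg s m h z := by
  funext t
  show (Fin.snoc z c : Fin (L+1) → S) ⟨s + t.1, by have := t.isLt; omega⟩ = _
  rw [show (⟨s + t.1, by have := t.isLt; omega⟩ : Fin (L+1))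
      = Fin.castSucc ⟨s + t.1, by have := t.isLt; omega⟩ from rfl, Fin.snoc_castSucc]
  rfl

lemma seg_snoc_last {L s m : ℕ} (h : s + (m+1) = L+1) (h' : s + (m+1) ≤ L+1)
    (z : Fin L → S) (c : S) :
    seg s (m+1) h' (Fin.snoc z c) = Fin.snoc (seg s m (by omega) z) c := by
  rw [seg_eq_snoc s m h' (Fin.snoc z c), snoc_eq_snoc_iff]
  refine ⟨seg_snoc s m (by omega) (by omega) z c, ?_⟩
  show (Fin.snoc z c : Fin (L+1) → S) ⟨s + m, by omega⟩ = c
  rw [show (⟨s + m, by omega⟩ : Fin (L+1)) = Fin.last L from by ext; simp only [Fin.val_last]; omega, Fin.snoc_last]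

lemma key {n k : ℕ} (u : (Fin n → S) → ℕ)
    (hpos : ∀ s, 1 ≤ s → ∀ (hs : s + k + 1 ≤ n) (w : Fin k → S),
      margin u s k (by omega) w ≠ 0) :
    ∀ j (hjn : k + j + 1 ≤ n),
    (∑ z : Fin (k + j + 1) → S,
      (margin u 0 (k+1) (by omega) (seg 0 (k+1) (by omega) z) : ℝ) *
      ∏ m : Fin j,
        ((margin u (m.1+1) (k+1) (by have := m.isLt; omega)
            (seg (m.1+1) (k+1) (by have := m.isLt; omega) z) : ℝ) /
         (margin u (m.1+1) k (by have := m.isLt; omega)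
            (seg (m.1+1) k (by have := m.isLt; omega) z) : ℝ)))
    = ∑ y : Fin n → S, (u y : ℝ) := by
  intro j
  induction j with
  | zero =>
    intro hjn
    simp only [Finset.univ_eq_empty, Finset.prod_empty, mul_one]
    have hseg : ∀ z : Fin (k+0+1) → S, seg 0 (k+1) (by omega : 0 + (k+1) ≤ k+0+1) z = z := by
      intro z; funext t
      show z ⟨0 + t.1, _⟩ = z t
      congr 1; ext; simp
    calc (∑ z : Fin (k+0+1) → S,
            (margin u 0 (k+1) (by omega) (seg 0 (k+1) (by omega) z) : ℝ))
        = ∑ w : Fin (k+1) → S, (margin u 0 (k+1) (by omega) w : ℝ) := by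
          refine Finset.sum_congr rfl fun z _ => ?_
          rw [hseg]
      _ = ∑ y : Fin n → S, (u y : ℝ) := by
          exact_mod_cast congrArg Nat.cast (sum_margin_univ u 0 (k+1) (by omega))
  | succ j ih =>
    intro hjn
    have hjn' : k + j + 1 ≤ n := by omega
    show (∑ z : Fin (k + j + 1 + 1) → S,
      (margin u 0 (k+1) (by omega) (seg 0 (k+1) (by omega) z) : ℝ) *
      ∏ m : Fin (j+1),
        ((margin u (m.1+1) (k+1) (by have := m.isLt; omega)
            (seg (m.1+1) (k+1) (by have := m.isLt; omega) z) : ℝ) /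
         (margin u (m.1+1) k (by have := m.isLt; omega)
            (seg (m.1+1) k (by have := m.isLt; omega) z) : ℝ)))
      = ∑ y : Fin n → S, (u y : ℝ)
    rw [sum_pi_snoc (L := k + j + 1)]
    rw [show (∑ z : Fin (k+j+1) → S, ∑ c : S,
        (margin u 0 (k+1) (by omega) (seg 0 (k+1) (by omega) (Fin.snoc z c)) : ℝ) *
        ∏ m : Fin (j+1),
          ((margin u (m.1+1) (k+1) (by have := m.isLt; omega)
              (seg (m.1+1) (k+1) (by have := m.isLt; omega) (Fin.snoc z c)) : ℝ) /
           (margin u (m.1+1) k (by have := m.isLt; omega)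
              (seg (m.1+1) k (by have := m.isLt; omega) (Fin.snoc z c)) : ℝ)))
      = ∑ z : Fin (k+j+1) → S,
        (margin u 0 (k+1) (by omega) (seg 0 (k+1) (by omega) z) : ℝ) *
        ∏ m : Fin j,
          ((margin u (m.1+1) (k+1) (by have := m.isLt; omega)
              (seg (m.1+1) (k+1) (by have := m.isLt; omega) z) : ℝ) /
           (margin u (m.1+1) k (by have := m.isLt; omega)
              (seg (m.1+1) k (by have := m.isLt; omega) z) : ℝ)) from ?_]
    · exact ih hjn'
    refine Finset.sum_congr rfl fun z _ => ?_
    have hstep : ∀ c : S,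
        (margin u 0 (k+1) (by omega) (seg 0 (k+1) (by omega) (Fin.snoc z c)) : ℝ) *
        ∏ m : Fin (j+1),
          ((margin u (m.1+1) (k+1) (by have := m.isLt; omega)
              (seg (m.1+1) (k+1) (by have := m.isLt; omega) (Fin.snoc z c)) : ℝ) /
           (margin u (m.1+1) k (by have := m.isLt; omega)
              (seg (m.1+1) k (by have := m.isLt; omega) (Fin.snoc z c)) : ℝ))
      = ((margin u 0 (k+1) (by omega) (seg 0 (k+1) (by omega) z) : ℝ) *
        ∏ m : Fin j,
          ((margin u (m.1+1) (k+1) (by have := m.isLt; omega)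
              (seg (m.1+1) (k+1) (by have := m.isLt; omega) z) : ℝ) /
           (margin u (m.1+1) k (by have := m.isLt; omega)
              (seg (m.1+1) k (by have := m.isLt; omega) z) : ℝ))) *
        ((margin u (j+1) (k+1) (by omega)
            (Fin.snoc (seg (j+1) k (by omega) z) c) : ℝ) /
         (margin u (j+1) k (by omega) (seg (j+1) k (by omega) z) : ℝ)) := by
      intro c
      rw [Fin.prod_univ_castSucc]
      simp only [Fin.coe_castSucc, Fin.val_last]
      rw [seg_snoc 0 (k+1) (by omega) (by omega) z c]
      rw [show (∏ m : Fin j,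
          ((margin u (m.1+1) (k+1) (by have := m.isLt; omega)
              (seg (m.1+1) (k+1) (by have := m.isLt; omega) (Fin.snoc z c)) : ℝ) /
           (margin u (m.1+1) k (by have := m.isLt; omega)
              (seg (m.1+1) k (by have := m.isLt; omega) (Fin.snoc z c)) : ℝ)))
        = ∏ m : Fin j,
          ((margin u (m.1+1) (k+1) (by have := m.isLt; omega)
              (seg (m.1+1) (k+1) (by have := m.isLt; omega) z) : ℝ) /
           (margin u (m.1+1) k (by have := m.isLt; omega)
              (seg (m.1+1) k (by have := m.isLt; omega) z) : ℝ)) from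
        Finset.prod_congr rfl fun m _ => by
          rw [seg_snoc (m.1+1) (k+1) (by have := m.isLt; omega) (by have := m.isLt; omega) z c,
            seg_snoc (m.1+1) k (by have := m.isLt; omega) (by have := m.isLt; omega) z c]]
      rw [seg_snoc_last (by omega) (by omega) z c,
        seg_snoc (j+1) k (by omega) (by omega) z c]
      ring
    calc (∑ c : S,
        (margin u 0 (k+1) (by omega) (seg 0 (k+1) (by omega) (Fin.snoc z c)) : ℝ) *
        ∏ m : Fin (j+1),
          ((margin u (m.1+1) (k+1) (by have := m.isLt; omega)
              (seg (m.1+1) (k+1) (by have := m.isLt; omega) (Fin.snoc z c)) : ℝ) /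
           (margin u (m.1+1) k (by have := m.isLt; omega)
              (seg (m.1+1) k (by have := m.isLt; omega) (Fin.snoc z c)) : ℝ)))
        = ((margin u 0 (k+1) (by omega) (seg 0 (k+1) (by omega) z) : ℝ) *
          ∏ m : Fin j,
          ((margin u (m.1+1) (k+1) (by have := m.isLt; omega)
              (seg (m.1+1) (k+1) (by have := m.isLt; omega) z) : ℝ) /
           (margin u (m.1+1) k (by have := m.isLt; omega)
              (seg (m.1+1) k (by have := m.isLt; omega) z) : ℝ))) *
          ((∑ c : S, (margin u (j+1) (k+1) (by omega)
              (Fin.snoc (seg (j+1) k (by omega) z) c) : ℝ)) /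
           (margin u (j+1) k (by omega) (seg (j+1) k (by omega) z) : ℝ)) := by
          rw [Finset.sum_congr rfl fun c _ => hstep c, ← Finset.mul_sum, Finset.sum_div]
      _ = _ := by
          have hD : (∑ c : S, (margin u (j+1) (k+1) (by omega : (j+1)+(k+1) ≤ n)
              (Fin.snoc (seg (j+1) k (by omega) z) c) : ℝ))
              = (margin u (j+1) k (by omega) (seg (j+1) k (by omega) z) : ℝ) := by
            exact_mod_cast congrArg Nat.cast
              (sum_margin_snoc u (j+1) k (by omega) (seg (j+1) k (by omega) z))
          rw [hD, div_self, mul_one]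
          exact_mod_cast hpos (j+1) (by omega) (by omega) _

/-- Under the nonvanishing assumption on the separator marginal counts, the closed-form MLE
`p̂` lies in the probability simplex. -/
theorem stmt15 (S : Type*) [Fintype S] [DecidableEq S] [Nonempty S]
    (n k : ℕ) (hk : 1 ≤ k) (hkn : k < n)
    (u : (Fin n → S) → ℕ) (hM : 0 < ∑ x : Fin n → S, u x)
    (hpos : ∀ (m : Fin (n - k - 1)) (w : Fin k → S),
      margin u (m.1 + 1) k (by have := m.isLt; omega) w ≠ 0) :
    (∑ x : Fin n → S, pHat hkn u x) = 1 ∧ ∀ x : Fin n → S, 0 ≤ pHat hkn u x := by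
  obtain ⟨j, rfl⟩ : ∃ j, n = k + j + 1 := ⟨n - k - 1, by omega⟩
  have hpos' : ∀ s, 1 ≤ s → ∀ (hs : s + k + 1 ≤ k + j + 1) (w : Fin k → S),
      margin u s k (by omega) w ≠ 0 := by
    intro s hs1 hs w
    obtain ⟨t, rfl⟩ : ∃ t, s = t + 1 := ⟨s - 1, by omega⟩
    exact hpos ⟨t, by omega⟩ w
  have hMr : (0 : ℝ) < ∑ y : Fin (k + j + 1) → S, (u y : ℝ) := by exact_mod_cast hM
  constructor
  · have hsum : (∑ x : Fin (k + j + 1) → S,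
        (∏ ℓ : Fin (k + j + 1 - k), (margin u ℓ.1 (k + 1) (by have := ℓ.isLt; omega)
            (seg ℓ.1 (k + 1) (by have := ℓ.isLt; omega) x) : ℝ)) /
        (∏ m : Fin (k + j + 1 - k - 1), (margin u (m.1 + 1) k (by have := m.isLt; omega)
            (seg (m.1 + 1) k (by have := m.isLt; omega) x) : ℝ)))
        = ∑ y : Fin (k + j + 1) → S, (u y : ℝ) := by
      have e1 : k + j + 1 - k = j + 1 := by omega
      have e2 : k + j + 1 - k - 1 = j := by omega
      calc (∑ x : Fin (k + j + 1) → S,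
          (∏ ℓ : Fin (k + j + 1 - k), (margin u ℓ.1 (k + 1) (by have := ℓ.isLt; omega)
              (seg ℓ.1 (k + 1) (by have := ℓ.isLt; omega) x) : ℝ)) /
          (∏ m : Fin (k + j + 1 - k - 1), (margin u (m.1 + 1) k (by have := m.isLt; omega)
              (seg (m.1 + 1) k (by have := m.isLt; omega) x) : ℝ)))
          = ∑ x : Fin (k + j + 1) → S,
            (∏ ℓ : Fin (j + 1), (margin u ℓ.1 (k + 1) (by have := ℓ.isLt; omega)
                (seg ℓ.1 (k + 1) (by have := ℓ.isLt; omega) x) : ℝ)) /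
            (∏ m : Fin j, (margin u (m.1 + 1) k (by have := m.isLt; omega)
                (seg (m.1 + 1) k (by have := m.isLt; omega) x) : ℝ)) := by
            refine Finset.sum_congr rfl fun x _ => ?_
            congr 1
            · exact Fintype.prod_equiv (finCongr e1) _ _ (fun ℓ => rfl)
            · exact Fintype.prod_equiv (finCongr e2) _ _ (fun m => rfl)
        _ = ∑ x : Fin (k + j + 1) → S,
            (margin u 0 (k+1) (by omega) (seg 0 (k+1) (by omega) x) : ℝ) *
            ∏ m : Fin j,
              ((margin u (m.1+1) (k+1) (by have := m.isLt; omega)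
                  (seg (m.1+1) (k+1) (by have := m.isLt; omega) x) : ℝ) /
               (margin u (m.1+1) k (by have := m.isLt; omega)
                  (seg (m.1+1) k (by have := m.isLt; omega) x) : ℝ)) := by
            refine Finset.sum_congr rfl fun x _ => ?_
            rw [Fin.prod_univ_succ, Finset.prod_div_distrib, mul_div_assoc]
            simp [Fin.val_succ]
        _ = ∑ y : Fin (k + j + 1) → S, (u y : ℝ) := key u hpos' j (le_refl _)
    unfold pHat
    simp only [mul_div_assoc]
    rw [← Finset.mul_sum, hsum, one_div, inv_mul_cancel₀ (ne_of_gt hMr)]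
  · intro x
    unfold pHat
    positivity


end MSM
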